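/- arXiv:2012.02088 — 2 statements merged into one kernel-verified Lean document; each statement's English description precedes it below -/
import Mathlib

section
/- Let ρ₁, ρ₂ ∈ ℰ¹ and let e₁ ∈ ℜ_{ρ₁}(ℰ), e₂ ∈ ℜ_{ρ₂}(ℰ). Then Ker ∂_{e₁} = Ker ∂_{e₂} if and only if ρ₁ = ρ₂. -/
open scoped BigOperators

namespace RootSubgroups

/-- The natural pairing on `ℚⁿ`, identifying `N_ℚ` with the dual of `M_ℚ`. -/
def pairQ {n : ℕ} (q v : Fin n → ℚ) : ℚ := ∑ i, q i * v i

/-- A vector of `M_ℚ = ℚⁿ` is a lattice point (lies in `M = ℤⁿ`) if all its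
coordinates are integers. -/
def IsLatticePt {n : ℕ} (v : Fin n → ℚ) : Prop := ∀ i, ∃ z : ℤ, v i = (z : ℚ)

/-- The convex cone generated by a set `S ⊆ ℚⁿ`: all finite nonnegative
rational combinations of elements of `S`. -/
def coneHull {n : ℕ} (S : Set (Fin n → ℚ)) : Set (Fin n → ℚ) :=
  {x | ∃ (F : Finset (Fin n → ℚ)) (c : (Fin n → ℚ) → ℚ),
      (F : Set (Fin n → ℚ)) ⊆ S ∧ (∀ v, 0 ≤ c v) ∧ x = ∑ v ∈ F, c v • v}

/-- A finitely generated convex cone: the cone generated by a finite set. -/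
def IsFGCone {n : ℕ} (C : Set (Fin n → ℚ)) : Prop :=
  ∃ S : Finset (Fin n → ℚ), C = coneHull (S : Set (Fin n → ℚ))

/-- The dual cone `ℰ = 𝒢^∨ = {q : ⟨q, v⟩ ≥ 0 for all v ∈ 𝒢}`. -/
def dualCone {n : ℕ} (C : Set (Fin n → ℚ)) : Set (Fin n → ℚ) :=
  {q | ∀ v ∈ C, 0 ≤ pairQ q v}

/-- A face of the dual cone `ℰ = C^∨`: a subset of the form
`{q ∈ ℰ : ⟨q, v⟩ = 0}` for some `v ∈ C`. -/
def IsFaceOfDual {n : ℕ} (C F : Set (Fin n → ℚ)) : Prop :=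
  ∃ v ∈ C, F = {q ∈ dualCone C | pairQ q v = 0}

/-- The ray `ℚ_{≥0}·ρ` spanned by a vector `ρ`. -/
def raySet {n : ℕ} (ρ : Fin n → ℚ) : Set (Fin n → ℚ) :=
  {x | ∃ c : ℚ, 0 ≤ c ∧ x = c • ρ}

/-- A lattice vector is primitive if it is not a positive integer multiple
`k·q` (`k ≠ 1`) of a lattice vector `q`. -/
def IsPrimitive {n : ℕ} (ρ : Fin n → ℚ) : Prop :=
  IsLatticePt ρ ∧ ∀ (k : ℕ) (q : Fin n → ℚ), IsLatticePt q → ρ = (k : ℚ) • q → k = 1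

/-- `ℰ¹`: the set of primitive lattice vectors `ρ ∈ N` such that `ℚ_{≥0}·ρ` is
a ray (one-dimensional face) of the dual cone `ℰ = C^∨`. -/
def E1 {n : ℕ} (C : Set (Fin n → ℚ)) : Set (Fin n → ℚ) :=
  {ρ | IsPrimitive ρ ∧ IsFaceOfDual C (raySet ρ)}

/-- The Demazure roots of `ℰ = C^∨` at `ρ ∈ ℰ¹`:
`ℜ_ρ(ℰ) = {e ∈ M : ⟨ρ, e⟩ = −1 and ⟨ρ', e⟩ ≥ 0 for all ρ' ∈ ℰ¹ \ {ρ}}`. -/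
def DemRootsAt {n : ℕ} (C : Set (Fin n → ℚ)) (ρ : Fin n → ℚ) : Set (Fin n → ℚ) :=
  {e | IsLatticePt e ∧ pairQ ρ e = -1 ∧ ∀ ρ' ∈ E1 C, ρ' ≠ ρ → 0 ≤ pairQ ρ' e}

/-- The set `ℜ(ℰ)` of all Demazure roots of `ℰ = C^∨`. -/
def DemRoots {n : ℕ} (C : Set (Fin n → ℚ)) : Set (Fin n → ℚ) :=
  ⋃ ρ ∈ E1 C, DemRootsAt C ρ

/-- A face of the cone `C`: a subset of the form `{v ∈ C : ⟨q, v⟩ = 0}` for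
some `q` in the dual cone of `C`. -/
def IsFaceOfCone {n : ℕ} (C F : Set (Fin n → ℚ)) : Prop :=
  ∃ q ∈ dualCone C, F = {v ∈ C | pairQ q v = 0}

/-- A facet of the cone `C`: a face whose linear span has codimension one in
the linear span of `C`. -/
def IsFacetOfCone {n : ℕ} (C F : Set (Fin n → ℚ)) : Prop :=
  IsFaceOfCone C F ∧
    Module.finrank ℚ ↥(Submodule.span ℚ F) + 1 = Module.finrank ℚ ↥(Submodule.span ℚ C)

end RootSubgroups

namespace RootSubgroups

/-- The defining property of the derivation `∂_e` of the monoid algebra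
`A = K[Γ]` associated with a Demazure root `e ∈ ℜ_ρ(ℰ)`:
`∂_e(χ^u) = ⟨ρ, u⟩ χ^{u+e}` for `u ∈ Γ` with `⟨ρ, u⟩ > 0`, and
`∂_e(χ^u) = 0` for `u ∈ Γ` with `⟨ρ, u⟩ = 0`. -/
def IsDemazureDerivation {n : ℕ} {K : Type*} [Field K]
    (Γ : AddSubmonoid (Fin n → ℚ)) (ρ e : Fin n → ℚ)
    (D : Derivation K (AddMonoidAlgebra K Γ) (AddMonoidAlgebra K Γ)) : Prop :=
  ∀ u : Γ,
    (∀ h : (↑u + e : Fin n → ℚ) ∈ Γ, 0 < pairQ ρ ↑u →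
      D (AddMonoidAlgebra.single u 1) =
        AddMonoidAlgebra.single (⟨↑u + e, h⟩ : Γ) ((pairQ ρ ↑u : ℚ) : K)) ∧
    (pairQ ρ ↑u = 0 → D (AddMonoidAlgebra.single u 1) = 0)

end RootSubgroups

namespace RootSubgroups

/-! ### Auxiliary lemmas -/

lemma pairQ_add_right {n : ℕ} (q v w : Fin n → ℚ) :
    pairQ q (v + w) = pairQ q v + pairQ q w := by
  simp [pairQ, Pi.add_apply, mul_add, Finset.sum_add_distrib]

lemma pairQ_sub_right {n : ℕ} (q v w : Fin n → ℚ) :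
    pairQ q (v - w) = pairQ q v - pairQ q w := by
  simp [pairQ, Pi.sub_apply, mul_sub, Finset.sum_sub_distrib]

lemma pairQ_smul_right {n : ℕ} (q : Fin n → ℚ) (c : ℚ) (v : Fin n → ℚ) :
    pairQ q (c • v) = c * pairQ q v := by
  simp only [pairQ, Pi.smul_apply, smul_eq_mul, Finset.mul_sum]
  exact Finset.sum_congr rfl fun i _ => by ring

lemma IsLatticePt.add' {n : ℕ} {v w : Fin n → ℚ} (hv : IsLatticePt v) (hw : IsLatticePt w) :
    IsLatticePt (v + w) := fun i => by
  obtain ⟨a, ha⟩ := hv i; obtain ⟨b, hb⟩ := hw i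
  exact ⟨a + b, by simp [ha, hb]⟩

lemma mem_coneHull_finset_iff {n : ℕ} (S : Finset (Fin n → ℚ)) (x : Fin n → ℚ) :
    x ∈ coneHull (S : Set (Fin n → ℚ)) ↔
      ∃ c : (Fin n → ℚ) → ℚ, (∀ v, 0 ≤ c v) ∧ x = ∑ v ∈ S, c v • v := by
  constructor
  · rintro ⟨F, c, hFS, hc, rfl⟩
    refine ⟨fun v => if v ∈ F then c v else 0, fun v => by dsimp; split <;> simp [hc], ?_⟩
    have h1 : ∑ v ∈ F, c v • v = ∑ v ∈ F, (if v ∈ F then c v else 0) • v :=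
      Finset.sum_congr rfl fun v hv => by simp [hv]
    rw [h1, Finset.sum_subset (Finset.coe_subset.mp hFS)]
    intro v _ hv; simp [hv]
  · rintro ⟨c, hc, rfl⟩
    exact ⟨S, c, subset_rfl, hc, rfl⟩

lemma coneHull_zero_mem {n : ℕ} (S : Set (Fin n → ℚ)) : (0 : Fin n → ℚ) ∈ coneHull S :=
  ⟨∅, fun _ => 0, by simp, fun _ => le_refl 0, by simp⟩

lemma coneHull_add_mem {n : ℕ} {S : Finset (Fin n → ℚ)} {x y : Fin n → ℚ}
    (hx : x ∈ coneHull (S : Set (Fin n → ℚ))) (hy : y ∈ coneHull (S : Set (Fin n → ℚ))) :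
    x + y ∈ coneHull (S : Set (Fin n → ℚ)) := by
  rw [mem_coneHull_finset_iff] at hx hy ⊢
  obtain ⟨c, hc, rfl⟩ := hx; obtain ⟨d, hd, rfl⟩ := hy
  refine ⟨fun v => c v + d v, fun v => add_nonneg (hc v) (hd v), ?_⟩
  rw [← Finset.sum_add_distrib]
  exact Finset.sum_congr rfl fun v _ => (add_smul _ _ _).symm

lemma coneHull_smul_mem {n : ℕ} {S : Finset (Fin n → ℚ)} {x : Fin n → ℚ} {a : ℚ}
    (ha : 0 ≤ a) (hx : x ∈ coneHull (S : Set (Fin n → ℚ))) :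
    a • x ∈ coneHull (S : Set (Fin n → ℚ)) := by
  rw [mem_coneHull_finset_iff] at hx ⊢
  obtain ⟨c, hc, rfl⟩ := hx
  refine ⟨fun v => a * c v, fun v => mul_nonneg ha (hc v), ?_⟩
  rw [Finset.smul_sum]
  exact Finset.sum_congr rfl fun v _ => smul_smul _ _ _

lemma exists_sub_of_span_top {n : ℕ} {C : Set (Fin n → ℚ)} (hfg : IsFGCone C)
    (hfull : Submodule.span ℚ C = ⊤) (x : Fin n → ℚ) :
    ∃ a ∈ C, ∃ b ∈ C, x = a - b := by
  obtain ⟨S, rfl⟩ := hfg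
  have hx : x ∈ Submodule.span ℚ (coneHull (S : Set (Fin n → ℚ))) := by
    rw [hfull]; trivial
  induction hx using Submodule.span_induction with
  | mem y hy => exact ⟨y, hy, 0, coneHull_zero_mem _, (sub_zero y).symm⟩
  | zero => exact ⟨0, coneHull_zero_mem _, 0, coneHull_zero_mem _, (sub_zero 0).symm⟩
  | add y z _ _ hy hz =>
      obtain ⟨a, ha, b, hb, rfl⟩ := hy
      obtain ⟨a', ha', b', hb', rfl⟩ := hz
      exact ⟨a + a', coneHull_add_mem ha ha', b + b', coneHull_add_mem hb hb',
        sub_add_sub_comm a b a' b'⟩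
  | smul r y _ hy =>
      obtain ⟨a, ha, b, hb, rfl⟩ := hy
      rcases le_or_gt 0 r with hr | hr
      · exact ⟨r • a, coneHull_smul_mem hr ha, r • b, coneHull_smul_mem hr hb,
          smul_sub r a b⟩
      · refine ⟨(-r) • b, coneHull_smul_mem (by linarith) hb,
          (-r) • a, coneHull_smul_mem (by linarith) ha, ?_⟩
        simp [smul_sub, neg_smul]; abel

lemma exists_nat_smul_lattice {n : ℕ} (v : Fin n → ℚ) :
    ∃ m : ℕ, 0 < m ∧ IsLatticePt ((m : ℚ) • v) := by
  refine ⟨∏ i, (v i).den, Finset.prod_pos fun i _ => (v i).pos, fun i => ?_⟩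
  have hd : ((v i).den : ℤ) ∣ ((∏ j, (v j).den : ℕ) : ℤ) :=
    Int.natCast_dvd_natCast.mpr (Finset.dvd_prod_of_mem _ (Finset.mem_univ i))
  obtain ⟨t, ht⟩ := hd
  refine ⟨(v i).num * t, ?_⟩
  have h0 : ((v i).den : ℚ) ≠ 0 := by exact_mod_cast (v i).den_nz
  have h1 : ((v i).num : ℚ) = v i * ((v i).den : ℚ) :=
    (div_eq_iff h0).mp (Rat.num_div_den (v i))
  have h2 : ((∏ j, (v j).den : ℕ) : ℚ) = ((v i).den : ℚ) * (t : ℚ) := by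
    exact_mod_cast congrArg (fun z : ℤ => (z : ℚ)) ht
  simp only [Pi.smul_apply, smul_eq_mul]
  rw [h2]
  push_cast
  rw [h1]
  ring

lemma primitive_eq_of_smul {n : ℕ} {ρ₁ ρ₂ : Fin n → ℚ}
    (h1 : IsPrimitive ρ₁) (h2 : IsPrimitive ρ₂) {c : ℚ} (hc : 0 ≤ c) (h : ρ₂ = c • ρ₁) :
    ρ₂ = ρ₁ := by
  have hc0 : c ≠ 0 := by
    rintro rfl
    have := h2.2 2 0 (fun i => ⟨0, by simp⟩) (by simpa using h)
    norm_num at this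
  have hcpos : 0 < c := lt_of_le_of_ne hc (Ne.symm hc0)
  choose z₁ hz₁ using h1.1
  choose z₂ hz₂ using h2.1
  have key : ∀ i, (c.den : ℤ) * z₂ i = c.num * z₁ i := by
    intro i
    have h3 : (z₂ i : ℚ) = c * (z₁ i : ℚ) := by
      rw [← hz₁, ← hz₂]; exact congrFun h i
    have hden0 : ((c.den : ℚ)) ≠ 0 := by exact_mod_cast c.den_nz
    have hc1 : (c.num : ℚ) = c * (c.den : ℚ) := (div_eq_iff hden0).mp (Rat.num_div_den c)
    have h4 : ((c.den : ℤ) : ℚ) * (z₂ i : ℚ) = (c.num : ℚ) * (z₁ i : ℚ) := by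
      rw [h3, hc1]; push_cast; ring
    exact_mod_cast h4
  have hdvd : ∀ i, (c.den : ℤ) ∣ z₁ i := by
    intro i
    have : (c.den : ℤ) ∣ z₁ i * c.num := ⟨z₂ i, by rw [key i]; ring⟩
    refine Int.dvd_of_dvd_mul_left_of_gcd_one this ?_
    simpa [Int.gcd, Nat.coprime_comm] using c.reduced
  have hden : c.den = 1 := by
    choose w hw using hdvd
    refine h1.2 c.den (fun i => ((w i : ℤ) : ℚ)) (fun i => ⟨w i, rfl⟩) ?_
    funext i
    simp only [Pi.smul_apply, smul_eq_mul]
    rw [hz₁ i, hw i]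
    push_cast; ring
  have hcnum : c = (c.num : ℚ) := by
    conv_lhs => rw [← Rat.num_div_den c]
    rw [hden]; simp
  have hnumpos : 0 < c.num := Rat.num_pos.mpr hcpos
  have hnum1 : c.num.toNat = 1 := by
    refine h2.2 c.num.toNat ρ₁ h1.1 ?_
    rw [h, hcnum]
    congr 1
    exact_mod_cast (Int.toNat_of_nonneg hnumpos.le).symm
  have hc1 : c = 1 := by
    rw [hcnum]
    have : c.num = 1 := by omega
    simp [this]
  rw [h, hc1, one_smul]

lemma E1_mem_dual {n : ℕ} {C : Set (Fin n → ℚ)} {ρ : Fin n → ℚ} (h : ρ ∈ E1 C) :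
    ρ ∈ dualCone C := by
  obtain ⟨v, hv, hface⟩ := h.2
  have hρ : ρ ∈ raySet ρ := ⟨1, zero_le_one, (one_smul ℚ ρ).symm⟩
  rw [hface] at hρ
  exact hρ.1


lemma demazure_spec {n : ℕ} {K : Type*} [Field K] [CharZero K]
    {C : Set (Fin n → ℚ)} (hfg : IsFGCone C) (hfull : Submodule.span ℚ C = ⊤)
    {Γ : AddSubmonoid (Fin n → ℚ)}
    (hΓ : (Γ : Set (Fin n → ℚ)) = {v | IsLatticePt v ∧ v ∈ C})
    {ρ e : Fin n → ℚ} (hρ : ρ ∈ E1 C) (he : e ∈ DemRootsAt C ρ)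
    {D : Derivation K (AddMonoidAlgebra K Γ) (AddMonoidAlgebra K Γ)}
    (hD : IsDemazureDerivation Γ ρ e D)
    (u : Γ) (hu : 0 < pairQ ρ ↑u) :
    ∃ h : ((u : Fin n → ℚ) + e) ∈ Γ,
      D (AddMonoidAlgebra.single u 1) =
        AddMonoidAlgebra.single (⟨(u : Fin n → ℚ) + e, h⟩ : Γ) ((pairQ ρ ↑u : ℚ) : K) := by
  classical
  obtain ⟨S, hS⟩ := hfg
  obtain ⟨heL, heρ, -⟩ := he
  obtain ⟨a, ha, b, hb, hab⟩ := exists_sub_of_span_top ⟨S, hS⟩ hfull e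
  have hρdual : ρ ∈ dualCone C := E1_mem_dual hρ
  have hρb : 0 < pairQ ρ b := by
    have h1 : pairQ ρ e = pairQ ρ a - pairQ ρ b := by rw [hab, pairQ_sub_right]
    have h2 : 0 ≤ pairQ ρ a := hρdual a ha
    rw [heρ] at h1; linarith
  obtain ⟨m, hm, hmlat⟩ := exists_nat_smul_lattice b
  have hm1 : (1 : ℚ) ≤ (m : ℚ) := by exact_mod_cast hm
  set w : Fin n → ℚ := (m : ℚ) • b with hwdef
  have hwC : w ∈ C := by
    rw [hS]
    exact coneHull_smul_mem (by linarith) (by rw [← hS]; exact hb)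
  have hwΓ : w ∈ Γ := by
    have hmem : w ∈ (Γ : Set (Fin n → ℚ)) := by rw [hΓ]; exact ⟨hmlat, hwC⟩
    exact hmem
  have hwρ : 0 < pairQ ρ w := by
    rw [hwdef, pairQ_smul_right]
    have hm0 : (0 : ℚ) < (m : ℚ) := by linarith
    positivity
  have hweC : w + e ∈ C := by
    have hEq : w + e = ((m : ℚ) - 1) • b + a := by
      rw [hab, hwdef, sub_smul, one_smul]; abel
    rw [hEq, hS]
    exact coneHull_add_mem (coneHull_smul_mem (by linarith) (by rw [← hS]; exact hb))
      (by rw [← hS]; exact ha)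
  have hweΓ : w + e ∈ Γ := by
    have hmem : w + e ∈ (Γ : Set (Fin n → ℚ)) := by
      rw [hΓ]; exact ⟨hmlat.add' heL, hweC⟩
    exact hmem
  set W : Γ := ⟨w, hwΓ⟩ with hWdef
  have hWe : ((W : Fin n → ℚ) + e) ∈ Γ := hweΓ
  have hDW : D (AddMonoidAlgebra.single W 1) =
      AddMonoidAlgebra.single (⟨(W : Fin n → ℚ) + e, hWe⟩ : Γ) ((pairQ ρ w : ℚ) : K) :=
    (hD W).1 hWe hwρ
  have hcoeadd : ((u + W : Γ) : Fin n → ℚ) = (u : Fin n → ℚ) + w := rfl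
  have hsρ : 0 < pairQ ρ ((u + W : Γ) : Fin n → ℚ) := by
    rw [hcoeadd, pairQ_add_right]; linarith
  have hsE : (((u + W : Γ) : Fin n → ℚ) + e) ∈ Γ := by
    have h1 : (((u + W : Γ) : Fin n → ℚ) + e) = (u : Fin n → ℚ) + (w + e) := by
      rw [hcoeadd, add_assoc]
    rw [h1]; exact Γ.add_mem u.2 hweΓ
  have hDs : D (AddMonoidAlgebra.single (u + W) 1) =
      AddMonoidAlgebra.single (⟨_, hsE⟩ : Γ) ((pairQ ρ ((u + W : Γ) : Fin n → ℚ) : ℚ) : K) :=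
    (hD (u + W)).1 hsE hsρ
  set cs : K := ((pairQ ρ ((u + W : Γ) : Fin n → ℚ) : ℚ) : K) with hcs
  set cw : K := ((pairQ ρ w : ℚ) : K) with hcw
  set cu : K := ((pairQ ρ (u : Fin n → ℚ) : ℚ) : K) with hcu
  have hcsw : cs = cu + cw := by
    rw [hcs, hcu, hcw, hcoeadd, pairQ_add_right]; push_cast; ring
  set P : Γ := (⟨((u + W : Γ) : Fin n → ℚ) + e, hsE⟩ : Γ) with hPdef
  have hP' : u + (⟨(W : Fin n → ℚ) + e, hWe⟩ : Γ) = P := by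
    apply Subtype.ext
    show (u : Fin n → ℚ) + (w + e) = ((u + W : Γ) : Fin n → ℚ) + e
    rw [hcoeadd, add_assoc]
  set y := D (AddMonoidAlgebra.single u (1 : K)) with hydef
  have hleib : AddMonoidAlgebra.single P cs
      = AddMonoidAlgebra.single P cw + AddMonoidAlgebra.single W 1 * y := by
    have h0 := D.leibniz (AddMonoidAlgebra.single u (1 : K)) (AddMonoidAlgebra.single W 1)
    rw [AddMonoidAlgebra.single_mul_single, mul_one] at h0
    rw [hDs, hDW, smul_eq_mul, smul_eq_mul, AddMonoidAlgebra.single_mul_single, one_mul,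
      hP'] at h0
    exact h0
  have hconΓ : ∀ s t : Γ, W + s = W + t ↔ s = t := by
    intro s t
    constructor
    · intro hEq
      apply Subtype.ext
      have h1 : w + (s : Fin n → ℚ) = w + (t : Fin n → ℚ) := congrArg Subtype.val hEq
      exact add_left_cancel h1
    · rintro rfl; rfl
  have heval : ∀ t : Γ, y.coeff t
      = (AddMonoidAlgebra.single P cu : AddMonoidAlgebra K Γ).coeff (W + t) := by
    intro t
    have h1 : (AddMonoidAlgebra.single W (1 : K) * y).coeff (W + t) = 1 * y.coeff t :=
      AddMonoidAlgebra.coeff_single_mul_eq_mul_coeff (x := y) (r := 1) (m := W) (m₁ := W + t) t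
        (fun s _ => hconΓ s t)
    rw [one_mul] at h1
    have h2 : (AddMonoidAlgebra.single P cs : AddMonoidAlgebra K Γ).coeff (W + t)
        = (AddMonoidAlgebra.single P cw : AddMonoidAlgebra K Γ).coeff (W + t) + y.coeff t := by
      rw [hleib, ← h1]; rfl
    simp only [AddMonoidAlgebra.coeff_single] at h2 ⊢
    by_cases hPt : P = W + t
    · rw [← hPt, Finsupp.single_eq_same, Finsupp.single_eq_same] at h2
      rw [← hPt, Finsupp.single_eq_same]
      rw [hcsw] at h2
      linear_combination -h2
    · rw [Finsupp.single_eq_of_ne' hPt, Finsupp.single_eq_of_ne' hPt] at h2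
      rw [Finsupp.single_eq_of_ne' hPt]
      linear_combination h2.symm
  by_cases hex : ∃ t : Γ, (t : Fin n → ℚ) = (u : Fin n → ℚ) + e
  · obtain ⟨t₀, ht₀⟩ := hex
    have hmem : ((u : Fin n → ℚ) + e) ∈ Γ := ht₀ ▸ t₀.2
    refine ⟨hmem, ?_⟩
    apply AddMonoidAlgebra.ext
    apply Finsupp.ext
    intro t
    rw [heval t]
    simp only [AddMonoidAlgebra.coeff_single]
    have hiff : P = W + t ↔ (⟨(u : Fin n → ℚ) + e, hmem⟩ : Γ) = t := by
      constructor
      · intro hEq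
        apply Subtype.ext
        have h1 : ((u + W : Γ) : Fin n → ℚ) + e = w + (t : Fin n → ℚ) :=
          congrArg Subtype.val hEq
        rw [hcoeadd] at h1
        have h2 : w + ((u : Fin n → ℚ) + e) = w + (t : Fin n → ℚ) := by rw [← h1]; abel
        exact add_left_cancel h2
      · rintro rfl
        apply Subtype.ext
        show ((u + W : Γ) : Fin n → ℚ) + e = w + ((u : Fin n → ℚ) + e)
        rw [hcoeadd]; abel
    by_cases hPt : P = W + t
    · rw [← hPt, Finsupp.single_eq_same, ← hiff.mp hPt, Finsupp.single_eq_same]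
    · rw [Finsupp.single_eq_of_ne' hPt,
        Finsupp.single_eq_of_ne' (fun h => hPt (hiff.mpr h))]
  · exfalso
    have hy0 : y = 0 := by
      apply AddMonoidAlgebra.ext
      apply Finsupp.ext
      intro t
      rw [heval t]
      simp only [AddMonoidAlgebra.coeff_single]
      have hne : P ≠ W + t := by
        intro hEq
        apply hex
        refine ⟨t, ?_⟩
        have h1 : ((u + W : Γ) : Fin n → ℚ) + e = w + (t : Fin n → ℚ) :=
          congrArg Subtype.val hEq
        rw [hcoeadd] at h1
        have h2 : w + ((u : Fin n → ℚ) + e) = w + (t : Fin n → ℚ) := by rw [← h1]; abel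
        exact (add_left_cancel h2).symm
      rw [Finsupp.single_eq_of_ne' hne]; rfl
    rw [hy0, mul_zero, add_zero] at hleib
    have h1 : cs = cw := by
      have h2 := congrArg (fun z : AddMonoidAlgebra K Γ => z.coeff P) hleib
      simpa [AddMonoidAlgebra.coeff_single, Finsupp.single_eq_same] using h2
    rw [hcsw] at h1
    have h3 : cu = 0 := by linear_combination h1
    rw [hcu, Rat.cast_eq_zero] at h3
    exact absurd h3 (ne_of_gt hu)

lemma demazure_ker_iff {n : ℕ} {K : Type*} [Field K] [CharZero K]
    {C : Set (Fin n → ℚ)} (hfg : IsFGCone C) (hfull : Submodule.span ℚ C = ⊤)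
    {Γ : AddSubmonoid (Fin n → ℚ)}
    (hΓ : (Γ : Set (Fin n → ℚ)) = {v | IsLatticePt v ∧ v ∈ C})
    {ρ e : Fin n → ℚ} (hρ : ρ ∈ E1 C) (he : e ∈ DemRootsAt C ρ)
    {D : Derivation K (AddMonoidAlgebra K Γ) (AddMonoidAlgebra K Γ)}
    (hD : IsDemazureDerivation Γ ρ e D)
    (x : AddMonoidAlgebra K Γ) :
    D x = 0 ↔ ∀ u ∈ x.coeff.support, pairQ ρ (u : Fin n → ℚ) = 0 := by
  classical
  have hnn : ∀ u : Γ, 0 ≤ pairQ ρ (u : Fin n → ℚ) := fun u => by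
    have hu : (u : Fin n → ℚ) ∈ (Γ : Set (Fin n → ℚ)) := u.2
    rw [hΓ] at hu
    exact E1_mem_dual hρ _ hu.2
  have hxsum : ∑ u ∈ x.coeff.support, AddMonoidAlgebra.single u (x.coeff u) = x :=
    AddMonoidAlgebra.sum_coeff_single x
  have hDx : D x = ∑ u ∈ x.coeff.support, x.coeff u • D (AddMonoidAlgebra.single u 1) := by
    conv_lhs => rw [← hxsum]
    rw [map_sum]
    refine Finset.sum_congr rfl fun u hu => ?_
    have h1 : AddMonoidAlgebra.single u (x.coeff u) =
        x.coeff u • AddMonoidAlgebra.single u (1 : K) := by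
      rw [AddMonoidAlgebra.smul_single', mul_one]
    rw [h1, D.map_smul]
  constructor
  · intro hDx0 u₀ hu₀
    by_contra hne
    have hpos : 0 < pairQ ρ (u₀ : Fin n → ℚ) := lt_of_le_of_ne (hnn u₀) (Ne.symm hne)
    obtain ⟨hmem, hval⟩ := demazure_spec ⟨hfg.choose, hfg.choose_spec⟩ hfull hΓ hρ he hD u₀ hpos
    set q₀ : Γ := (⟨(u₀ : Fin n → ℚ) + e, hmem⟩ : Γ) with hq₀
    have h0 : (D x).coeff q₀ = x.coeff u₀ * ((pairQ ρ (u₀ : Fin n → ℚ) : ℚ) : K) := by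
      rw [hDx, AddMonoidAlgebra.coeff_sum, Finset.sum_apply']
      rw [Finset.sum_eq_single u₀]
      · rw [AddMonoidAlgebra.coeff_smul, Finsupp.smul_apply, hval, AddMonoidAlgebra.coeff_single,
          Finsupp.single_eq_same, smul_eq_mul]
      · intro u hu hneq
        rw [AddMonoidAlgebra.coeff_smul, Finsupp.smul_apply]
        rcases eq_or_lt_of_le (hnn u) with h1 | hpos'
        · rw [(hD u).2 h1.symm]
          simp
        · obtain ⟨hm', hv'⟩ := demazure_spec ⟨hfg.choose, hfg.choose_spec⟩ hfull hΓ hρ he hD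
            u hpos'
          rw [hv']
          have hne2 : (⟨(u : Fin n → ℚ) + e, hm'⟩ : Γ) ≠ q₀ := by
            intro hEq
            apply hneq
            apply Subtype.ext
            have h2 : (u : Fin n → ℚ) + e = (u₀ : Fin n → ℚ) + e := congrArg Subtype.val hEq
            exact add_right_cancel h2
          rw [AddMonoidAlgebra.coeff_single, Finsupp.single_eq_of_ne' hne2, smul_zero]
      · intro h; exact absurd hu₀ h
    rw [hDx0] at h0
    have h1 : x.coeff u₀ * ((pairQ ρ (u₀ : Fin n → ℚ) : ℚ) : K) = 0 := by rw [← h0]; rfl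
    have hx0 : x.coeff u₀ ≠ 0 := Finsupp.mem_support_iff.mp hu₀
    have hc0 : ((pairQ ρ (u₀ : Fin n → ℚ) : ℚ) : K) ≠ 0 := by
      rw [Rat.cast_ne_zero]; exact ne_of_gt hpos
    exact mul_ne_zero hx0 hc0 h1
  · intro h
    rw [hDx]
    refine Finset.sum_eq_zero fun u hu => ?_
    rw [(hD u).2 (h u hu), smul_zero]

/-- With `Γ = M ∩ 𝒢` and `A = K[Γ]`, let `ρ₁, ρ₂ ∈ ℰ¹`, `e₁ ∈ ℜ_{ρ₁}(ℰ)` and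
`e₂ ∈ ℜ_{ρ₂}(ℰ)`.  Then `Ker ∂_{e₁} = Ker ∂_{e₂}` if and only if `ρ₁ = ρ₂`. -/
theorem demazure_derivation_kernel_eq_iff {n : ℕ} {K : Type*} [Field K] [CharZero K]
    (C : Set (Fin n → ℚ)) (hfg : IsFGCone C) (hfull : Submodule.span ℚ C = ⊤)
    (Γ : AddSubmonoid (Fin n → ℚ))
    (hΓ : (Γ : Set (Fin n → ℚ)) = {v | IsLatticePt v ∧ v ∈ C})
    (ρ₁ ρ₂ e₁ e₂ : Fin n → ℚ) (hρ₁ : ρ₁ ∈ E1 C) (hρ₂ : ρ₂ ∈ E1 C)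
    (he₁ : e₁ ∈ DemRootsAt C ρ₁) (he₂ : e₂ ∈ DemRootsAt C ρ₂)
    (D₁ D₂ : Derivation K (AddMonoidAlgebra K Γ) (AddMonoidAlgebra K Γ))
    (hD₁ : IsDemazureDerivation Γ ρ₁ e₁ D₁) (hD₂ : IsDemazureDerivation Γ ρ₂ e₂ D₂) :
    LinearMap.ker D₁.toLinearMap = LinearMap.ker D₂.toLinearMap ↔ ρ₁ = ρ₂ := by
  constructor
  · intro hker
    by_contra hne
    obtain ⟨v, hvC, hface⟩ := hρ₂.2
    have hρ₂v : pairQ ρ₂ v = 0 := by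
      have h1 : ρ₂ ∈ raySet ρ₂ := ⟨1, zero_le_one, (one_smul ℚ ρ₂).symm⟩
      rw [hface] at h1
      exact h1.2
    have hρ₁v : 0 < pairQ ρ₁ v := by
      rcases lt_or_eq_of_le (E1_mem_dual hρ₁ v hvC) with h | h
      · exact h
      · exfalso
        have h2 : ρ₁ ∈ raySet ρ₂ := by
          rw [hface]
          exact ⟨E1_mem_dual hρ₁, h.symm⟩
        obtain ⟨c, hc, hc2⟩ := h2
        exact hne (primitive_eq_of_smul hρ₂.1 hρ₁.1 hc hc2)
    obtain ⟨m, hm, hmlat⟩ := exists_nat_smul_lattice v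
    have hm0 : (0 : ℚ) < (m : ℚ) := by exact_mod_cast hm
    have hmvC : (m : ℚ) • v ∈ C := by
      obtain ⟨S, hS⟩ := hfg
      rw [hS]
      exact coneHull_smul_mem hm0.le (by rw [← hS]; exact hvC)
    have hmvΓ : (m : ℚ) • v ∈ Γ := by
      have hmem : (m : ℚ) • v ∈ (Γ : Set (Fin n → ℚ)) := by rw [hΓ]; exact ⟨hmlat, hmvC⟩
      exact hmem
    set u : Γ := ⟨(m : ℚ) • v, hmvΓ⟩ with hu
    have h2 : pairQ ρ₂ (u : Fin n → ℚ) = 0 := by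
      show pairQ ρ₂ ((m : ℚ) • v) = 0
      rw [pairQ_smul_right, hρ₂v, mul_zero]
    have h1 : 0 < pairQ ρ₁ (u : Fin n → ℚ) := by
      show 0 < pairQ ρ₁ ((m : ℚ) • v)
      rw [pairQ_smul_right]
      positivity
    have hker2 : D₂ (AddMonoidAlgebra.single u (1 : K)) = 0 := (hD₂ u).2 h2
    have hmem2 : AddMonoidAlgebra.single u (1 : K) ∈ LinearMap.ker D₂.toLinearMap :=
      LinearMap.mem_ker.mpr hker2
    rw [← hker] at hmem2
    have hD1z : D₁ (AddMonoidAlgebra.single u (1 : K)) = 0 := by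
      have h3 := LinearMap.mem_ker.mp hmem2
      exact h3
    rw [demazure_ker_iff hfg hfull hΓ hρ₁ he₁ hD₁] at hD1z
    have hsupp : u ∈ (AddMonoidAlgebra.single u (1 : K)).coeff.support := by
      rw [AddMonoidAlgebra.coeff_single, Finsupp.support_single_ne_zero u one_ne_zero]
      exact Finset.mem_singleton_self u
    exact absurd (hD1z u hsupp) (ne_of_gt h1)
  · intro h
    subst h
    ext x
    rw [LinearMap.mem_ker, LinearMap.mem_ker]
    show D₁ x = 0 ↔ D₂ x = 0
    rw [demazure_ker_iff hfg hfull hΓ hρ₁ he₁ hD₁ x,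
      demazure_ker_iff hfg hfull hΓ hρ₁ he₂ hD₂ x]


end RootSubgroups
end

section
/- The set of facets of 𝒢̄ is exactly the following collection: the cone 𝒢, the cone w(𝒢), and the cones generated by ℱ ∪ w(ℱ) where ℱ runs over the facets of 𝒢 that are not contained in Ker α^∨. -/
open scoped BigOperators

namespace RootSubgroups

/-- The embedding of `M_ℚ = ℚⁿ` into `M̄_ℚ = ℚ^{n+1}`, where the last
coordinate is the coefficient of the extra basis element `α`. -/
def emb {n : ℕ} (v : Fin n → ℚ) : Fin (n + 1) → ℚ := Fin.snoc v 0

/-- The extra basis element `α` of `M̄ = M ⊕ ℤα`. -/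
def alphaVec (n : ℕ) : Fin (n + 1) → ℚ := Fin.snoc 0 1

/-- The involution `w(x) = x − α^∨(x)·α` of `M̄_ℚ`, where the homomorphism
`α^∨ : M̄ → ℤ` is represented by pairing with a lattice vector `ac ∈ N̄`. -/
def wmap {n : ℕ} (ac : Fin (n + 1) → ℚ) (x : Fin (n + 1) → ℚ) : Fin (n + 1) → ℚ :=
  x - pairQ ac x • alphaVec n

/-- The cone `𝒢̄ ⊆ M̄_ℚ` generated by `𝒢 ∪ w(𝒢)`. -/
def barCone {n : ℕ} (ac : Fin (n + 1) → ℚ) (C : Set (Fin n → ℚ)) :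
    Set (Fin (n + 1) → ℚ) :=
  coneHull (emb '' C ∪ wmap ac '' (emb '' C))

end RootSubgroups

namespace RootSubgroups






variable {n m : ℕ}

lemma pairQ_add (q x y : Fin n → ℚ) : pairQ q (x + y) = pairQ q x + pairQ q y := by
  simp [pairQ, mul_add, Finset.sum_add_distrib]

lemma pairQ_smul (q : Fin n → ℚ) (c : ℚ) (x : Fin n → ℚ) :
    pairQ q (c • x) = c * pairQ q x := by
  simp only [pairQ, Pi.smul_apply, smul_eq_mul, Finset.mul_sum]
  exact Finset.sum_congr rfl fun i _ => by ring

def pairL (q : Fin n → ℚ) : (Fin n → ℚ) →ₗ[ℚ] ℚ where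
  toFun := pairQ q
  map_add' := pairQ_add q
  map_smul' c x := pairQ_smul q c x

@[simp] lemma pairL_apply (q x : Fin n → ℚ) : pairL q x = pairQ q x := rfl

lemma pairQ_zero (q : Fin n → ℚ) : pairQ q 0 = 0 := map_zero (pairL q)

lemma pairQ_sub (q x y : Fin n → ℚ) : pairQ q (x - y) = pairQ q x - pairQ q y :=
  map_sub (pairL q) x y

lemma pairQ_sum (q : Fin n → ℚ) (F : Finset (Fin n → ℚ)) (c : (Fin n → ℚ) → ℚ) :
    pairQ q (∑ v ∈ F, c v • v) = ∑ v ∈ F, c v * pairQ q v := by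
  have h := map_sum (pairL q) (fun v => c v • v) F
  simp only [pairL_apply] at h
  rw [h]
  exact Finset.sum_congr rfl fun v _ => pairQ_smul q (c v) v

/-- cone axioms -/
def IsCone (T : Set (Fin n → ℚ)) : Prop :=
  0 ∈ T ∧ (∀ x ∈ T, ∀ y ∈ T, x + y ∈ T) ∧ ∀ (c : ℚ), 0 ≤ c → ∀ x ∈ T, c • x ∈ T

lemma subset_coneHull (S : Set (Fin n → ℚ)) : S ⊆ coneHull S := by
  classical
  intro x hx
  refine ⟨{x}, fun v => if v = x then 1 else 0, by simpa, fun v => by dsimp only; split <;> norm_num, by simp⟩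

lemma zero_mem_coneHull (S : Set (Fin n → ℚ)) : (0 : Fin n → ℚ) ∈ coneHull S :=
  ⟨∅, 0, by simp, fun v => le_refl 0, by simp⟩

lemma add_mem_coneHull {S : Set (Fin n → ℚ)} {x y : Fin n → ℚ}
    (hx : x ∈ coneHull S) (hy : y ∈ coneHull S) : x + y ∈ coneHull S := by
  classical
  obtain ⟨F, c, hFS, hc, rfl⟩ := hx
  obtain ⟨F', c', hFS', hc', rfl⟩ := hy
  refine ⟨F ∪ F', fun v => (if v ∈ F then c v else 0) + (if v ∈ F' then c' v else 0), ?_, ?_, ?_⟩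
  · intro v hv
    rcases Finset.mem_union.mp hv with h | h
    · exact hFS h
    · exact hFS' h
  · intro v
    apply add_nonneg <;> (split <;> simp [hc, hc'])
  · have e1 : ∀ (G G' : Finset (Fin n → ℚ)) (d : (Fin n → ℚ) → ℚ), G ⊆ G' →
        ∑ v ∈ G', (if v ∈ G then d v else 0) • v = ∑ v ∈ G, d v • v := by
      intro G G' d hGG'
      rw [← Finset.sum_subset hGG' (fun v _ hv => by simp [hv])]
      exact Finset.sum_congr rfl fun v hv => by simp [hv]
    simp only [add_smul, Finset.sum_add_distrib]
    rw [e1 F (F ∪ F') c Finset.subset_union_left, e1 F' (F ∪ F') c' Finset.subset_union_right]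

lemma smul_mem_coneHull {S : Set (Fin n → ℚ)} {c : ℚ} (hc : 0 ≤ c) {x : Fin n → ℚ}
    (hx : x ∈ coneHull S) : c • x ∈ coneHull S := by
  obtain ⟨F, d, hFS, hd, rfl⟩ := hx
  refine ⟨F, fun v => c * d v, hFS, fun v => mul_nonneg hc (hd v), ?_⟩
  rw [Finset.smul_sum]
  exact Finset.sum_congr rfl fun v _ => by dsimp only; rw [smul_smul]

lemma isCone_coneHull (S : Set (Fin n → ℚ)) : IsCone (coneHull S) :=
  ⟨zero_mem_coneHull S, fun _ hx _ hy => add_mem_coneHull hx hy,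
    fun _ hc _ hx => smul_mem_coneHull hc hx⟩

lemma coneHull_subset {S T : Set (Fin n → ℚ)} (hST : S ⊆ T) (hT : IsCone T) :
    coneHull S ⊆ T := by
  classical
  rintro x ⟨F, c, hFS, hc, rfl⟩
  revert hFS
  induction F using Finset.induction_on with
  | empty => intro _; simpa using hT.1
  | @insert a F ha ih =>
      intro hFS
      rw [Finset.sum_insert ha]
      exact hT.2.1 _ (hT.2.2 _ (hc a) _ (hST (hFS (Finset.mem_insert_self a F)))) _
        (ih fun v hv => hFS (Finset.mem_insert_of_mem hv))

lemma coneHull_eq_self {T : Set (Fin n → ℚ)} (hT : IsCone T) : coneHull T = T :=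
  le_antisymm (coneHull_subset le_rfl hT) (subset_coneHull T)

lemma isCone_image {T : Set (Fin n → ℚ)} (hT : IsCone T)
    (f : (Fin n → ℚ) →ₗ[ℚ] (Fin m → ℚ)) : IsCone (⇑f '' T) := by
  refine ⟨⟨0, hT.1, map_zero f⟩, ?_, ?_⟩
  · rintro _ ⟨x, hx, rfl⟩ _ ⟨y, hy, rfl⟩
    exact ⟨x + y, hT.2.1 x hx y hy, map_add f x y⟩
  · rintro c hc _ ⟨x, hx, rfl⟩
    exact ⟨c • x, hT.2.2 c hc x hx, map_smul f c x⟩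

lemma coneHull_union_decomp {A B : Set (Fin n → ℚ)} {x : Fin n → ℚ}
    (hx : x ∈ coneHull (A ∪ B)) :
    ∃ p ∈ coneHull A, ∃ r ∈ coneHull B, x = p + r := by
  classical
  obtain ⟨F, c, hF, hc, rfl⟩ := hx
  refine ⟨∑ v ∈ F.filter (· ∈ A), c v • v, ⟨F.filter (· ∈ A), c, ?_, hc, rfl⟩,
          ∑ v ∈ F.filter (fun v => v ∉ A), c v • v,
          ⟨F.filter (fun v => v ∉ A), c, ?_, hc, rfl⟩, ?_⟩
  · intro v hv
    exact (Finset.mem_filter.mp hv).2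
  · intro v hv
    obtain ⟨h1, h2⟩ := Finset.mem_filter.mp hv
    rcases hF h1 with h | h
    · exact absurd h h2
    · exact h
  · exact (Finset.sum_filter_add_sum_filter_not F _ _).symm

lemma coneHull_subset_span (S : Set (Fin n → ℚ)) :
    coneHull S ⊆ (Submodule.span ℚ S : Set (Fin n → ℚ)) := by
  rintro x ⟨F, c, hF, hc, rfl⟩
  exact Submodule.sum_mem _ fun v hv => Submodule.smul_mem _ _ (Submodule.subset_span (hF hv))

lemma span_coneHull (S : Set (Fin n → ℚ)) :
    Submodule.span ℚ (coneHull S) = Submodule.span ℚ S :=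
  le_antisymm (Submodule.span_le.mpr (coneHull_subset_span S))
    (Submodule.span_mono (subset_coneHull S))

lemma pairQ_nonneg_coneHull {q : Fin n → ℚ} {S : Set (Fin n → ℚ)}
    (h : ∀ v ∈ S, 0 ≤ pairQ q v) : ∀ x ∈ coneHull S, 0 ≤ pairQ q x := by
  rintro x ⟨F, c, hF, hc, rfl⟩
  rw [pairQ_sum]
  exact Finset.sum_nonneg fun v hv => mul_nonneg (hc v) (h v (hF hv))

lemma finrank_map_eq' (f : (Fin n → ℚ) →ₗ[ℚ] (Fin m → ℚ)) (hf : Function.Injective f)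
    (p : Submodule ℚ (Fin n → ℚ)) :
    Module.finrank ℚ (Submodule.map f p) = Module.finrank ℚ p :=
  ((Submodule.equivMapOfInjective f hf p).finrank_eq).symm






variable {n : ℕ}

@[simp] lemma emb_castSucc (v : Fin n → ℚ) (i : Fin n) : emb v i.castSucc = v i := by
  simp [emb]

@[simp] lemma emb_last (v : Fin n → ℚ) : emb v (Fin.last n) = 0 := by
  simp [emb]

@[simp] lemma alphaVec_castSucc (i : Fin n) : alphaVec n i.castSucc = 0 := by
  simp [alphaVec]

@[simp] lemma alphaVec_last : alphaVec n (Fin.last n) = 1 := by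
  simp [alphaVec]

lemma alphaVec_ne_zero : alphaVec n ≠ 0 := fun h => by
  simpa using congrFun h (Fin.last n)

def embL : (Fin n → ℚ) →ₗ[ℚ] (Fin (n + 1) → ℚ) where
  toFun := emb
  map_add' x y := by
    funext i
    refine Fin.lastCases ?_ (fun j => ?_) i <;> simp
  map_smul' c x := by
    funext i
    refine Fin.lastCases ?_ (fun j => ?_) i <;> simp

@[simp] lemma embL_apply (v : Fin n → ℚ) : embL v = emb v := rfl

lemma emb_add (u v : Fin n → ℚ) : emb (u + v) = emb u + emb v := map_add embL u v

lemma emb_zero : emb (0 : Fin n → ℚ) = 0 := map_zero (embL (n := n))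

lemma emb_injective : Function.Injective (emb (n := n)) := fun x y h =>
  funext fun i => by
    have := congrFun h i.castSucc
    simpa using this

lemma pairQ_emb (q : Fin (n + 1) → ℚ) (v : Fin n → ℚ) :
    pairQ q (emb v) = pairQ (Fin.init q) v := by
  simp [pairQ, Fin.sum_univ_castSucc, Fin.init]

lemma pairQ_alphaVec (q : Fin (n + 1) → ℚ) : pairQ q (alphaVec n) = q (Fin.last n) := by
  simp [pairQ, Fin.sum_univ_castSucc]

lemma pairQ_wmap (ac q x : Fin (n + 1) → ℚ) :
    pairQ q (wmap ac x) = pairQ q x - pairQ ac x * q (Fin.last n) := by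
  rw [wmap, pairQ_sub, pairQ_smul, pairQ_alphaVec]

def wL (ac : Fin (n + 1) → ℚ) : (Fin (n + 1) → ℚ) →ₗ[ℚ] (Fin (n + 1) → ℚ) where
  toFun := wmap ac
  map_add' x y := by
    simp only [wmap, pairQ_add, add_smul]
    abel
  map_smul' c x := by
    simp only [wmap, pairQ_smul, RingHom.id_apply, smul_sub, smul_smul]

@[simp] lemma wL_apply (ac x : Fin (n + 1) → ℚ) : wL ac x = wmap ac x := rfl

lemma wmap_add (ac x y : Fin (n + 1) → ℚ) :
    wmap ac (x + y) = wmap ac x + wmap ac y := map_add (wL ac) x y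

lemma wmap_zero (ac : Fin (n + 1) → ℚ) : wmap ac 0 = 0 := map_zero (wL ac)

lemma wmap_involutive {ac : Fin (n + 1) → ℚ} (haca : pairQ ac (alphaVec n) = 2) :
    Function.Involutive (wmap ac) := by
  intro x
  have h : pairQ ac (wmap ac x) = - pairQ ac x := by
    rw [pairQ_wmap, ← pairQ_alphaVec ac, haca]; ring
  rw [wmap, h, wmap]
  module

lemma wmap_injective {ac : Fin (n + 1) → ℚ} (haca : pairQ ac (alphaVec n) = 2) :
    Function.Injective (wmap ac) := (wmap_involutive haca).injective

lemma wmap_emb_of_zero {ac : Fin (n + 1) → ℚ} {v : Fin n → ℚ}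
    (h : pairQ ac (emb v) = 0) : wmap ac (emb v) = emb v := by
  simp [wmap, h]

lemma emb_sub_wmap (ac : Fin (n + 1) → ℚ) (v : Fin n → ℚ) :
    emb v - wmap ac (emb v) = pairQ ac (emb v) • alphaVec n := by
  simp [wmap]

lemma eq_emb_add_smul_alpha (x : Fin (n + 1) → ℚ) :
    x = emb (Fin.init x) + x (Fin.last n) • alphaVec n := by
  funext i
  refine Fin.lastCases ?_ (fun j => ?_) i <;> simp [Fin.init]

/-- membership in the bar cone -/
lemma mem_barCone_iff {C : Set (Fin n → ℚ)} (hC : IsCone C) (ac : Fin (n + 1) → ℚ)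
    (x : Fin (n + 1) → ℚ) :
    x ∈ barCone ac C ↔ ∃ u ∈ C, ∃ v ∈ C, x = emb u + wmap ac (emb v) := by
  constructor
  · intro hx
    obtain ⟨p, hp, r, hr, rfl⟩ := coneHull_union_decomp hx
    have hA : coneHull (emb '' C) = emb '' C := by
      have := isCone_image hC (embL (n := n))
      have hcoe : ⇑(embL (n := n)) = emb := rfl
      rw [hcoe] at this
      exact coneHull_eq_self (by convert this)
    have hB : coneHull (wmap ac '' (emb '' C)) = wmap ac '' (emb '' C) := by
      have h1 := isCone_image hC (embL (n := n))
      have h2 := isCone_image h1 (wL ac)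
      refine coneHull_eq_self (by convert h2 <;> rfl)
    rw [hA] at hp
    rw [hB] at hr
    obtain ⟨u, hu, rfl⟩ := hp
    obtain ⟨_, ⟨v, hv, rfl⟩, rfl⟩ := hr
    exact ⟨u, hu, v, hv, rfl⟩
  · rintro ⟨u, hu, v, hv, rfl⟩
    exact add_mem_coneHull
      (subset_coneHull _ (Set.mem_union_left _ ⟨u, hu, rfl⟩))
      (subset_coneHull _ (Set.mem_union_right _ ⟨emb v, ⟨v, hv, rfl⟩, rfl⟩))

lemma emb_mem_barCone {C : Set (Fin n → ℚ)} (ac : Fin (n + 1) → ℚ) {u : Fin n → ℚ}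
    (hu : u ∈ C) : emb u ∈ barCone ac C :=
  subset_coneHull _ (Set.mem_union_left _ ⟨u, hu, rfl⟩)

lemma wmap_emb_mem_barCone {C : Set (Fin n → ℚ)} (ac : Fin (n + 1) → ℚ) {u : Fin n → ℚ}
    (hu : u ∈ C) : wmap ac (emb u) ∈ barCone ac C :=
  subset_coneHull _ (Set.mem_union_right _ ⟨emb u, ⟨u, hu, rfl⟩, rfl⟩)





variable {n : ℕ}

lemma span_emb_image (C : Set (Fin n → ℚ)) :
    Submodule.span ℚ (emb '' C) = Submodule.map embL (Submodule.span ℚ C) := by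
  rw [Submodule.map_span]; rfl

lemma finrank_span_emb_top {C : Set (Fin n → ℚ)} (hfull : Submodule.span ℚ C = ⊤) :
    Module.finrank ℚ (Submodule.span ℚ (emb '' C)) = n := by
  rw [span_emb_image, hfull, finrank_map_eq' _ emb_injective, finrank_top,
    Module.finrank_fin_fun]

lemma span_barCone_top {C : Set (Fin n → ℚ)} {ac : Fin (n + 1) → ℚ}
    (hfull : Submodule.span ℚ C = ⊤) (hnz : ∃ v ∈ C, pairQ ac (emb v) ≠ 0) :
    Submodule.span ℚ (barCone ac C) = ⊤ := by
  obtain ⟨v₀, hv₀, hφ⟩ := hnz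
  have hαmem : alphaVec n ∈ Submodule.span ℚ (barCone ac C) := by
    have h1 : emb v₀ - wmap ac (emb v₀) ∈ Submodule.span ℚ (barCone ac C) :=
      sub_mem (Submodule.subset_span (emb_mem_barCone ac hv₀))
        (Submodule.subset_span (wmap_emb_mem_barCone ac hv₀))
    rw [emb_sub_wmap] at h1
    have h2 := Submodule.smul_mem _ (pairQ ac (emb v₀))⁻¹ h1
    rwa [smul_smul, inv_mul_cancel₀ hφ, one_smul] at h2
  have hemb : ∀ y : Fin n → ℚ, emb y ∈ Submodule.span ℚ (barCone ac C) := by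
    intro y
    have h1 : emb y ∈ Submodule.span ℚ (emb '' C) := by
      rw [span_emb_image, hfull]
      exact Submodule.mem_map.mpr ⟨y, trivial, rfl⟩
    exact Submodule.span_mono (fun z hz => subset_coneHull _ (Set.mem_union_left _ hz)) h1
  rw [eq_top_iff]
  intro x _
  rw [eq_emb_add_smul_alpha x]
  exact add_mem (hemb _) (Submodule.smul_mem _ _ hαmem)

lemma finrank_span_barCone {C : Set (Fin n → ℚ)} {ac : Fin (n + 1) → ℚ}
    (hfull : Submodule.span ℚ C = ⊤) (hnz : ∃ v ∈ C, pairQ ac (emb v) ≠ 0) :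
    Module.finrank ℚ (Submodule.span ℚ (barCone ac C)) = n + 1 := by
  rw [span_barCone_top hfull hnz, finrank_top, Module.finrank_fin_fun]

lemma finrank_span_wemb_top {C : Set (Fin n → ℚ)} {ac : Fin (n + 1) → ℚ}
    (haca : pairQ ac (alphaVec n) = 2) (hfull : Submodule.span ℚ C = ⊤) :
    Module.finrank ℚ (Submodule.span ℚ (wmap ac '' (emb '' C))) = n := by
  have h1 : Submodule.span ℚ (wmap ac '' (emb '' C))
      = Submodule.map (wL ac) (Submodule.span ℚ (emb '' C)) := by
    rw [Submodule.map_span]; rfl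
  rw [h1, finrank_map_eq' _ (wmap_injective haca), finrank_span_emb_top hfull]

lemma span_pair_cone {ac : Fin (n + 1) → ℚ} {G : Set (Fin n → ℚ)} {g₀ : Fin n → ℚ}
    (hg₀ : g₀ ∈ G) (hφ : pairQ ac (emb g₀) ≠ 0) :
    Submodule.span ℚ (coneHull (emb '' G ∪ wmap ac '' (emb '' G)))
      = Submodule.map embL (Submodule.span ℚ G) ⊔ Submodule.span ℚ {alphaVec n} := by
  rw [span_coneHull]
  apply le_antisymm
  · rw [Submodule.span_le]
    rintro x (⟨g, hg, rfl⟩ | ⟨_, ⟨g, hg, rfl⟩, rfl⟩)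
    · exact Submodule.mem_sup_left (Submodule.mem_map.mpr ⟨g, Submodule.subset_span hg, rfl⟩)
    · have h1 : wmap ac (emb g) = emb g - pairQ ac (emb g) • alphaVec n := rfl
      show wmap ac (emb g) ∈ (_ ⊔ _ : Submodule ℚ _)
      rw [h1]
      exact sub_mem
        (Submodule.mem_sup_left (Submodule.mem_map.mpr ⟨g, Submodule.subset_span hg, rfl⟩))
        (Submodule.mem_sup_right (Submodule.smul_mem _ _ (Submodule.mem_span_singleton_self _)))
  · refine sup_le ?_ ?_
    · rw [Submodule.map_span]
      exact Submodule.span_mono Set.subset_union_left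
    · have h1 : emb g₀ - wmap ac (emb g₀)
          ∈ Submodule.span ℚ (emb '' G ∪ wmap ac '' (emb '' G)) :=
        sub_mem (Submodule.subset_span (Or.inl ⟨g₀, hg₀, rfl⟩))
          (Submodule.subset_span (Or.inr ⟨emb g₀, ⟨g₀, hg₀, rfl⟩, rfl⟩))
      rw [emb_sub_wmap] at h1
      have h2 := Submodule.smul_mem _ (pairQ ac (emb g₀))⁻¹ h1
      rw [smul_smul, inv_mul_cancel₀ hφ, one_smul] at h2
      exact Submodule.span_le.mpr (Set.singleton_subset_iff.mpr h2)

lemma finrank_span_pair_cone {ac : Fin (n + 1) → ℚ} {G : Set (Fin n → ℚ)} {g₀ : Fin n → ℚ}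
    (hg₀ : g₀ ∈ G) (hφ : pairQ ac (emb g₀) ≠ 0) :
    Module.finrank ℚ (Submodule.span ℚ (coneHull (emb '' G ∪ wmap ac '' (emb '' G))))
      = Module.finrank ℚ (Submodule.span ℚ G) + 1 := by
  rw [span_pair_cone hg₀ hφ]
  have hinf : Submodule.map (embL (n := n)) (Submodule.span ℚ G)
      ⊓ Submodule.span ℚ {alphaVec n} = ⊥ := by
    rw [Submodule.eq_bot_iff]
    intro x hx
    rw [Submodule.mem_inf] at hx
    obtain ⟨hx1, hx2⟩ := hx
    obtain ⟨c, rfl⟩ := Submodule.mem_span_singleton.mp hx2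
    obtain ⟨y, -, hy⟩ := Submodule.mem_map.mp hx1
    have hc : c = 0 := by
      have h := congrFun hy (Fin.last n)
      simpa using h.symm
    rw [hc, zero_smul]
  have h := Submodule.finrank_sup_add_finrank_inf_eq
    (Submodule.map (embL (n := n)) (Submodule.span ℚ G)) (Submodule.span ℚ {alphaVec n})
  rw [hinf, finrank_bot, finrank_span_singleton alphaVec_ne_zero,
    finrank_map_eq' _ emb_injective] at h
  omega

lemma barCone_face_isCone {C : Set (Fin n → ℚ)} {ac : Fin (n + 1) → ℚ}
    (qb : Fin (n + 1) → ℚ) :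
    IsCone {x | x ∈ barCone ac C ∧ pairQ qb x = 0} := by
  refine ⟨⟨zero_mem_coneHull _, pairQ_zero qb⟩, ?_, ?_⟩
  · rintro x ⟨hx1, hx2⟩ y ⟨hy1, hy2⟩
    exact ⟨add_mem_coneHull hx1 hy1, by rw [pairQ_add, hx2, hy2, add_zero]⟩
  · rintro c hc x ⟨hx1, hx2⟩
    exact ⟨smul_mem_coneHull hc hx1, by rw [pairQ_smul, hx2, mul_zero]⟩


variable {n : ℕ}

/-- `𝒢 = emb '' C` is a facet of `𝒢̄`. -/
lemma facet_emb {C : Set (Fin n → ℚ)} {ac : Fin (n + 1) → ℚ} (hC : IsCone C)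
    (hfull : Submodule.span ℚ C = ⊤)
    (hnn : ∀ v ∈ C, 0 ≤ pairQ ac (emb v))
    (hnz : ∃ v ∈ C, pairQ ac (emb v) ≠ 0) :
    IsFacetOfCone (barCone ac C) (emb '' C) := by
  have hzero : ∀ u : Fin n → ℚ, pairQ (0 : Fin n → ℚ) u = 0 := by
    intro u; simp [pairQ]
  constructor
  · refine ⟨Fin.snoc 0 (-1), ?_, ?_⟩
    · intro x hx
      refine pairQ_nonneg_coneHull ?_ x hx
      rintro z (⟨u, hu, rfl⟩ | ⟨_, ⟨u, hu, rfl⟩, rfl⟩)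
      · rw [pairQ_emb, Fin.init_snoc, hzero]
      · rw [pairQ_wmap, pairQ_emb, Fin.init_snoc, Fin.snoc_last, hzero]
        have := hnn u hu
        linarith
    · ext x
      constructor
      · rintro ⟨u, hu, rfl⟩
        exact ⟨emb_mem_barCone ac hu, by rw [pairQ_emb, Fin.init_snoc, hzero]⟩
      · rintro ⟨hx, hx0⟩
        obtain ⟨u, hu, v, hv, rfl⟩ := (mem_barCone_iff hC ac _).mp hx
        rw [pairQ_add, pairQ_emb, pairQ_wmap, pairQ_emb, Fin.init_snoc, Fin.snoc_last,
          hzero, hzero] at hx0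
        have hφv : pairQ ac (emb v) = 0 := by linarith
        rw [wmap_emb_of_zero hφv, ← emb_add]
        exact ⟨u + v, hC.2.1 u hu v hv, rfl⟩
  · rw [finrank_span_emb_top hfull, finrank_span_barCone hfull hnz]

/-- `w(𝒢)` is a facet of `𝒢̄`. -/
lemma facet_wemb {C : Set (Fin n → ℚ)} {ac : Fin (n + 1) → ℚ} (hC : IsCone C)
    (hfull : Submodule.span ℚ C = ⊤) (haca : pairQ ac (alphaVec n) = 2)
    (hnn : ∀ v ∈ C, 0 ≤ pairQ ac (emb v))
    (hnz : ∃ v ∈ C, pairQ ac (emb v) ≠ 0) :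
    IsFacetOfCone (barCone ac C) (wmap ac '' (emb '' C)) := by
  have hval : ∀ u : Fin n → ℚ, pairQ (Fin.init ac) u = pairQ ac (emb u) :=
    fun u => (pairQ_emb ac u).symm
  constructor
  · refine ⟨Fin.snoc (Fin.init ac) 1, ?_, ?_⟩
    · intro x hx
      refine pairQ_nonneg_coneHull ?_ x hx
      rintro z (⟨u, hu, rfl⟩ | ⟨_, ⟨u, hu, rfl⟩, rfl⟩)
      · rw [pairQ_emb, Fin.init_snoc, hval]
        exact hnn u hu
      · rw [pairQ_wmap, pairQ_emb, Fin.init_snoc, Fin.snoc_last, hval]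
        linarith
    · ext x
      constructor
      · rintro ⟨_, ⟨v, hv, rfl⟩, rfl⟩
        refine ⟨wmap_emb_mem_barCone ac hv, ?_⟩
        rw [pairQ_wmap, pairQ_emb, Fin.init_snoc, Fin.snoc_last, hval]
        ring
      · rintro ⟨hx, hx0⟩
        obtain ⟨u, hu, v, hv, rfl⟩ := (mem_barCone_iff hC ac _).mp hx
        rw [pairQ_add, pairQ_emb, pairQ_wmap, pairQ_emb, Fin.init_snoc, Fin.snoc_last,
          hval, hval] at hx0
        have hφu : pairQ ac (emb u) = 0 := by linarith
        rw [← wmap_emb_of_zero hφu, ← wmap_add, ← emb_add]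
        exact ⟨emb (u + v), ⟨u + v, hC.2.1 u hu v hv, rfl⟩, rfl⟩
  · rw [finrank_span_wemb_top haca hfull, finrank_span_barCone hfull hnz]

/-- `cone(ℱ ∪ wℱ)` is a facet of `𝒢̄` for `ℱ` a facet of `𝒢` not inside `ker α^∨`. -/
lemma facet_pair {C G : Set (Fin n → ℚ)} {ac : Fin (n + 1) → ℚ} (hC : IsCone C)
    (hfull : Submodule.span ℚ C = ⊤)
    (hnn : ∀ v ∈ C, 0 ≤ pairQ ac (emb v))
    (hnz : ∃ v ∈ C, pairQ ac (emb v) ≠ 0)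
    (hG : IsFacetOfCone C G) (hφ : ¬ ∀ v ∈ G, pairQ ac (emb v) = 0) :
    IsFacetOfCone (barCone ac C) (coneHull (emb '' G ∪ wmap ac '' (emb '' G))) := by
  obtain ⟨⟨q, hq, hGeq⟩, hGrank⟩ := hG
  push_neg at hφ
  obtain ⟨g₀, hg₀, hφ₀⟩ := hφ
  have hmemG : ∀ v, v ∈ G ↔ v ∈ C ∧ pairQ q v = 0 := fun v => by rw [hGeq]; rfl
  have hGC : G ⊆ C := fun v hv => ((hmemG v).mp hv).1
  constructor
  · refine ⟨Fin.snoc q 0, ?_, ?_⟩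
    · intro x hx
      refine pairQ_nonneg_coneHull ?_ x hx
      rintro z (⟨u, hu, rfl⟩ | ⟨_, ⟨u, hu, rfl⟩, rfl⟩)
      · rw [pairQ_emb, Fin.init_snoc]
        exact hq u hu
      · rw [pairQ_wmap, pairQ_emb, Fin.init_snoc, Fin.snoc_last, mul_zero, sub_zero]
        exact hq u hu
    · ext x
      constructor
      · intro hx
        have hx' : x ∈ {y | y ∈ barCone ac C ∧ pairQ (Fin.snoc q 0) y = 0} := by
          refine coneHull_subset ?_ (barCone_face_isCone _) hx
          rintro z (⟨g, hg, rfl⟩ | ⟨_, ⟨g, hg, rfl⟩, rfl⟩)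
          · exact ⟨emb_mem_barCone ac (hGC hg),
              by rw [pairQ_emb, Fin.init_snoc]; exact ((hmemG g).mp hg).2⟩
          · exact ⟨wmap_emb_mem_barCone ac (hGC hg),
              by rw [pairQ_wmap, pairQ_emb, Fin.init_snoc, Fin.snoc_last, mul_zero,
                sub_zero]; exact ((hmemG g).mp hg).2⟩
        exact hx'
      · rintro ⟨hx, hx0⟩
        obtain ⟨u, hu, v, hv, rfl⟩ := (mem_barCone_iff hC ac _).mp hx
        rw [pairQ_add, pairQ_emb, pairQ_wmap, pairQ_emb, Fin.init_snoc, Fin.snoc_last,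
          mul_zero, sub_zero] at hx0
        have h1 : 0 ≤ pairQ q u := hq u hu
        have h2 : 0 ≤ pairQ q v := hq v hv
        have huG : u ∈ G := (hmemG u).mpr ⟨hu, by linarith⟩
        have hvG : v ∈ G := (hmemG v).mpr ⟨hv, by linarith⟩
        exact add_mem_coneHull
          (subset_coneHull _ (Set.mem_union_left _ ⟨u, huG, rfl⟩))
          (subset_coneHull _ (Set.mem_union_right _ ⟨emb v, ⟨v, hvG, rfl⟩, rfl⟩))
  · rw [finrank_span_pair_cone hg₀ hφ₀, finrank_span_barCone hfull hnz]
    rw [hfull, finrank_top, Module.finrank_fin_fun] at hGrank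
    omega


variable {n : ℕ}

/-- Every facet of `𝒢̄` is of one of the three kinds. -/
lemma facet_cases {C : Set (Fin n → ℚ)} {ac : Fin (n + 1) → ℚ} (hC : IsCone C)
    (hfull : Submodule.span ℚ C = ⊤)
    (hnn : ∀ v ∈ C, 0 ≤ pairQ ac (emb v))
    (hnz : ∃ v ∈ C, pairQ ac (emb v) ≠ 0)
    (haca : pairQ ac (alphaVec n) = 2)
    {F : Set (Fin (n + 1) → ℚ)}
    (hF : IsFacetOfCone (barCone ac C) F) :
    F = emb '' C ∨ F = wmap ac '' (emb '' C) ∨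
      ∃ G, IsFacetOfCone C G ∧ ¬ (∀ v ∈ G, pairQ ac (emb v) = 0) ∧
        F = coneHull (emb '' G ∪ wmap ac '' (emb '' G)) := by
  obtain ⟨⟨qb, hqb, hFeq⟩, hrank⟩ := hF
  rw [finrank_span_barCone hfull hnz] at hrank
  have hrankF : Module.finrank ℚ (Submodule.span ℚ F) = n := by omega
  have hmemF : ∀ x, x ∈ F ↔ x ∈ barCone ac C ∧ pairQ qb x = 0 := fun x => by
    rw [hFeq]; rfl
  have hker : ∀ x ∈ Submodule.span ℚ F, pairQ qb x = 0 := by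
    intro x hx
    have hle : Submodule.span ℚ F ≤ LinearMap.ker (pairL qb) := by
      rw [Submodule.span_le]
      intro z hz
      simpa [LinearMap.mem_ker] using ((hmemF z).mp hz).2
    simpa using hle hx
  by_cases hA : ∀ v ∈ C, pairQ qb (wmap ac (emb v)) = 0 → pairQ ac (emb v) = 0
  · -- F = emb '' C
    left
    have hsub : F ⊆ emb '' C := by
      intro x hx
      obtain ⟨hx1, hx0⟩ := (hmemF x).mp hx
      obtain ⟨u, hu, v, hv, rfl⟩ := (mem_barCone_iff hC ac _).mp hx1
      have h1 : 0 ≤ pairQ qb (emb u) := hqb _ (emb_mem_barCone ac hu)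
      have h2 : 0 ≤ pairQ qb (wmap ac (emb v)) := hqb _ (wmap_emb_mem_barCone ac hv)
      rw [pairQ_add] at hx0
      have hφv : pairQ ac (emb v) = 0 := hA v hv (by linarith)
      rw [wmap_emb_of_zero hφv, ← emb_add]
      exact ⟨u + v, hC.2.1 u hu v hv, rfl⟩
    have hspan : Submodule.span ℚ F = Submodule.span ℚ (emb '' C) := by
      apply Submodule.eq_of_le_of_finrank_le (Submodule.span_mono hsub)
      rw [hrankF, finrank_span_emb_top hfull]
    refine Set.Subset.antisymm hsub ?_
    intro x hx
    refine (hmemF x).mpr ⟨?_, ?_⟩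
    · obtain ⟨u, hu, rfl⟩ := hx
      exact emb_mem_barCone ac hu
    · exact hker x (by rw [hspan]; exact Submodule.subset_span hx)
  by_cases hB : ∀ u ∈ C, pairQ qb (emb u) = 0 → pairQ ac (emb u) = 0
  · -- F = wmap '' emb '' C
    right; left
    have hsub : F ⊆ wmap ac '' (emb '' C) := by
      intro x hx
      obtain ⟨hx1, hx0⟩ := (hmemF x).mp hx
      obtain ⟨u, hu, v, hv, rfl⟩ := (mem_barCone_iff hC ac _).mp hx1
      have h1 : 0 ≤ pairQ qb (emb u) := hqb _ (emb_mem_barCone ac hu)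
      have h2 : 0 ≤ pairQ qb (wmap ac (emb v)) := hqb _ (wmap_emb_mem_barCone ac hv)
      rw [pairQ_add] at hx0
      have hφu : pairQ ac (emb u) = 0 := hB u hu (by linarith)
      rw [← wmap_emb_of_zero hφu, ← wmap_add, ← emb_add]
      exact ⟨emb (u + v), ⟨u + v, hC.2.1 u hu v hv, rfl⟩, rfl⟩
    have hspan : Submodule.span ℚ F = Submodule.span ℚ (wmap ac '' (emb '' C)) := by
      apply Submodule.eq_of_le_of_finrank_le (Submodule.span_mono hsub)
      rw [hrankF, finrank_span_wemb_top haca hfull]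
    refine Set.Subset.antisymm hsub ?_
    intro x hx
    refine (hmemF x).mpr ⟨?_, ?_⟩
    · obtain ⟨_, ⟨u, hu, rfl⟩, rfl⟩ := hx
      exact wmap_emb_mem_barCone ac hu
    · exact hker x (by rw [hspan]; exact Submodule.subset_span hx)
  -- the middle case
  right; right
  push_neg at hA hB
  obtain ⟨g₂, hg₂C, hg₂0, hφ₂⟩ := hA
  obtain ⟨g₁, hg₁C, hg₁0, hφ₁⟩ := hB
  have hφ₁pos : 0 < pairQ ac (emb g₁) := lt_of_le_of_ne (hnn g₁ hg₁C) (Ne.symm hφ₁)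
  have hφ₂pos : 0 < pairQ ac (emb g₂) := lt_of_le_of_ne (hnn g₂ hg₂C) (Ne.symm hφ₂)
  have hs : qb (Fin.last n) = 0 := by
    have h1 : 0 ≤ pairQ qb (wmap ac (emb g₁)) := hqb _ (wmap_emb_mem_barCone ac hg₁C)
    rw [pairQ_wmap] at h1
    have h2 : 0 ≤ pairQ qb (emb g₂) := hqb _ (emb_mem_barCone ac hg₂C)
    have h3 := hg₂0
    rw [pairQ_wmap] at h3
    have hle : qb (Fin.last n) ≤ 0 := by
      by_contra hpos
      push_neg at hpos
      have := mul_pos hφ₁pos hpos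
      linarith
    have hge : 0 ≤ qb (Fin.last n) := by
      by_contra hneg
      push_neg at hneg
      have := mul_neg_of_pos_of_neg hφ₂pos hneg
      linarith
    linarith
  set q := Fin.init qb with hqdef
  have hvale : ∀ v : Fin n → ℚ, pairQ qb (emb v) = pairQ q v := fun v => pairQ_emb qb v
  have hvalw : ∀ v : Fin n → ℚ, pairQ qb (wmap ac (emb v)) = pairQ q v := fun v => by
    rw [pairQ_wmap, pairQ_emb, hs, mul_zero, sub_zero]
  have hqdual : ∀ v ∈ C, 0 ≤ pairQ q v := fun v hv => by
    rw [← hvale]; exact hqb _ (emb_mem_barCone ac hv)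
  have hg₁G : g₁ ∈ ({v ∈ C | pairQ q v = 0} : Set (Fin n → ℚ)) :=
    ⟨hg₁C, by rw [← hvale]; exact hg₁0⟩
  have hFeq2 : F = coneHull (emb '' ({v ∈ C | pairQ q v = 0} : Set (Fin n → ℚ))
      ∪ wmap ac '' (emb '' ({v ∈ C | pairQ q v = 0} : Set (Fin n → ℚ)))) := by
    ext x
    constructor
    · intro hx
      obtain ⟨hx1, hx0⟩ := (hmemF x).mp hx
      obtain ⟨u, hu, v, hv, rfl⟩ := (mem_barCone_iff hC ac _).mp hx1
      have h1 : 0 ≤ pairQ qb (emb u) := hqb _ (emb_mem_barCone ac hu)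
      have h2 : 0 ≤ pairQ qb (wmap ac (emb v)) := hqb _ (wmap_emb_mem_barCone ac hv)
      rw [pairQ_add] at hx0
      have huG : u ∈ ({v ∈ C | pairQ q v = 0} : Set (Fin n → ℚ)) :=
        ⟨hu, by rw [← hvale]; linarith⟩
      have hvG : v ∈ ({v ∈ C | pairQ q v = 0} : Set (Fin n → ℚ)) :=
        ⟨hv, by rw [← hvalw]; linarith⟩
      exact add_mem_coneHull
        (subset_coneHull _ (Set.mem_union_left _ ⟨u, huG, rfl⟩))
        (subset_coneHull _ (Set.mem_union_right _ ⟨emb v, ⟨v, hvG, rfl⟩, rfl⟩))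
    · intro hx
      refine (hmemF x).mpr (coneHull_subset ?_ (barCone_face_isCone qb) hx)
      rintro z (⟨g, hg, rfl⟩ | ⟨_, ⟨g, hg, rfl⟩, rfl⟩)
      · exact ⟨emb_mem_barCone ac hg.1, by rw [hvale]; exact hg.2⟩
      · exact ⟨wmap_emb_mem_barCone ac hg.1, by rw [hvalw]; exact hg.2⟩
  rw [hFeq2, finrank_span_pair_cone hg₁G hφ₁] at hrankF
  refine ⟨{v ∈ C | pairQ q v = 0}, ⟨⟨q, hqdual, rfl⟩, ?_⟩, ?_, hFeq2⟩
  · rw [hfull, finrank_top, Module.finrank_fin_fun]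
    omega
  · intro hall
    exact hφ₁ (hall g₁ hg₁G)



/-- Let `M̄ = M ⊕ ℤα`, let `α^∨ : M̄ → ℤ` be a homomorphism (given by pairing
with the lattice vector `ac`) with `α^∨(α) = 2`, and `w(x) = x − α^∨(x)·α`.
Let `𝒢 = C ⊆ M_ℚ` be a finitely generated convex cone spanning `M_ℚ` on
which `α^∨` is nonnegative but not identically zero, and let `𝒢̄` be the
cone generated by `𝒢 ∪ w(𝒢)`.  Then the facets of `𝒢̄` are exactly: the
cone `𝒢`, the cone `w(𝒢)`, and the cones generated by `ℱ ∪ w(ℱ)` where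
`ℱ` runs over the facets of `𝒢` not contained in `Ker α^∨`. -/
theorem facets_of_barCone {n : ℕ} (hn : 1 ≤ n)
    (C : Set (Fin n → ℚ)) (hfg : IsFGCone C) (hfull : Submodule.span ℚ C = ⊤)
    (ac : Fin (n + 1) → ℚ) (hacL : IsLatticePt ac)
    (haca : pairQ ac (alphaVec n) = 2)
    (hnn : ∀ v ∈ C, 0 ≤ pairQ ac (emb v))
    (hnz : ∃ v ∈ C, pairQ ac (emb v) ≠ 0) :
    {F : Set (Fin (n + 1) → ℚ) | IsFacetOfCone (barCone ac C) F} =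
      {emb '' C, wmap ac '' (emb '' C)} ∪
      {F : Set (Fin (n + 1) → ℚ) | ∃ G : Set (Fin n → ℚ),
        IsFacetOfCone C G ∧ ¬ (∀ v ∈ G, pairQ ac (emb v) = 0) ∧
        F = coneHull (emb '' G ∪ wmap ac '' (emb '' G))} := by
  obtain ⟨S0, hS0⟩ := hfg
  have hC : IsCone C := by rw [hS0]; exact isCone_coneHull (S0 : Set (Fin n → ℚ))
  ext F
  simp only [Set.mem_setOf_eq, Set.mem_union, Set.mem_insert_iff, Set.mem_singleton_iff]
  constructor
  · intro h
    rcases facet_cases hC hfull hnn hnz haca h with h1 | h1 | h1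
    · exact Or.inl (Or.inl h1)
    · exact Or.inl (Or.inr h1)
    · exact Or.inr h1
  · rintro ((rfl | rfl) | ⟨G, hG, hφ, rfl⟩)
    · exact facet_emb hC hfull hnn hnz
    · exact facet_wemb hC hfull haca hnn hnz
    · exact facet_pair hC hfull hnn hnz hG hφ

end RootSubgroups
end
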